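/- Let z, z̃ ∈ ℂ² have equal nonzero norms ⟨z|z⟩ = ⟨z̃|z̃⟩ ≠ 0, and let g = g(z,z̃) be the associated SU(2) element. Define X(z) = (1/2)⟨z|σ⃗|z⟩ and X̃(z̃) = (1/2)⟨z̃|σ⃗|z̃⟩, regarded as traceless Hermitian matrices X = X_i σ_i, X̃ = X̃_i σ_i. Then X̃ = − g⁻¹ X g. -/
import Mathlib


open BigOperators Matrix

noncomputable section

abbrev V : Type := Fin 2 → ℂ

/-- The Pauli matrices. -/
def pauli : Fin 3 → Matrix (Fin 2) (Fin 2) ℂ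
  | 0 => !![0, 1; 1, 0]
  | 1 => !![0, -Complex.I; Complex.I, 0]
  | 2 => !![1, 0; 0, -1]

/-- The vector `X(z) ∈ ℝ³`, with `X_i(z) = (1/2)⟨z|σ_i|z⟩`. -/
def Xvec (z : V) (i : Fin 3) : ℝ :=
  ((1 / 2 : ℂ) * ∑ A, ∑ B, (starRingEnd ℂ) (z A) * pauli i A B * z B).re

/-- The squared norm `⟨z|z⟩` of a spinor. -/
def normsq (z : V) : ℝ := ∑ A, Complex.normSq (z A)

/-- The dual spinor `|z] = ε|z̄⟩`, with `ε = [[0,-1],[1,0]]`. -/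
def dualS (z : V) : V := ![-(starRingEnd ℂ) (z 1), (starRingEnd ℂ) (z 0)]

/-- `g(z,z̃) = (|z⟩[z̃| − |z]⟨z̃|)/√(⟨z|z⟩⟨z̃|z̃⟩)`. -/
def gMat (z zt : V) : Matrix (Fin 2) (Fin 2) ℂ :=
  Matrix.of fun A B =>
    (z A * (starRingEnd ℂ) (dualS zt B) - dualS z A * (starRingEnd ℂ) (zt B)) /
      (Real.sqrt (normsq z * normsq zt) : ℝ)

/-- `X = Σ_i X_i(z) σ_i` as a 2×2 Hermitian matrix. -/
def Xmat (z : V) : Matrix (Fin 2) (Fin 2) ℂ := ∑ i, (Xvec z i : ℂ) • pauli i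

/-- The unnormalized `g`-matrix `|z⟩[z̃| − |z]⟨z̃|`. -/
def Pmat (z zt : V) : Matrix (Fin 2) (Fin 2) ℂ :=
  Matrix.of fun A B =>
    z A * (starRingEnd ℂ) (dualS zt B) - dualS z A * (starRingEnd ℂ) (zt B)

lemma gMat_eq (z zt : V) :
    gMat z zt = ((Real.sqrt (normsq z * normsq zt) : ℂ))⁻¹ • Pmat z zt := by
  ext A B
  simp [gMat, Pmat, div_eq_inv_mul]

lemma normsq_nonneg (z : V) : 0 ≤ normsq z :=
  Finset.sum_nonneg fun _ _ => Complex.normSq_nonneg _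

lemma PhP (z zt : V) :
    (Pmat z zt)ᴴ * Pmat z zt = ((normsq z * normsq zt : ℝ) : ℂ) • 1 := by
  ext A B
  fin_cases A <;> fin_cases B <;>
    simp [Pmat, dualS, Matrix.mul_apply, Fin.sum_univ_two, normsq, Matrix.one_apply,
      Complex.normSq_apply, map_sub, _root_.map_mul, map_neg, Complex.ext_iff] <;>
    constructor <;> ring

lemma Xmat_apply (z : V) (A B : Fin 2) :
    Xmat z A B = z A * (starRingEnd ℂ) (z B)
      - ((normsq z / 2 : ℝ) : ℂ) * (if A = B then 1 else 0) := by
  fin_cases A <;> fin_cases B <;>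
    simp [Xmat, Xvec, pauli, Fin.sum_univ_three, Fin.sum_univ_two, normsq,
      Matrix.sum_apply, Complex.normSq_apply] <;>
    apply Complex.ext <;>
    simp [Complex.add_re, Complex.mul_re, Complex.mul_im, Complex.div_ofNat] <;> ring

lemma normsq_coe (z : V) :
    ((normsq z : ℝ) : ℂ) = z 0 * (starRingEnd ℂ) (z 0) + z 1 * (starRingEnd ℂ) (z 1) := by
  refine Complex.ext ?_ ?_ <;>
    simp [normsq, Fin.sum_univ_two, Complex.normSq_apply, Complex.mul_re, Complex.mul_im] <;>
    ring

lemma Pclaim (z zt : V) (h : normsq z = normsq zt) :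
    Pmat z zt * Xmat zt = -(Xmat z * Pmat z zt) := by
  have hzz : z 0 * (starRingEnd ℂ) (z 0) + z 1 * (starRingEnd ℂ) (z 1)
      = zt 0 * (starRingEnd ℂ) (zt 0) + zt 1 * (starRingEnd ℂ) (zt 1) := by
    rw [← normsq_coe, ← normsq_coe, h]
  ext A B
  fin_cases A <;> fin_cases B
  · simp [Matrix.mul_apply, Fin.sum_univ_two, Xmat_apply, Pmat, dualS, h, normsq_coe]
    linear_combination -(z 0 * zt 1) * hzz
  · simp [Matrix.mul_apply, Fin.sum_univ_two, Xmat_apply, Pmat, dualS, h, normsq_coe]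
    linear_combination (z 0 * zt 0) * hzz
  · simp [Matrix.mul_apply, Fin.sum_univ_two, Xmat_apply, Pmat, dualS, h, normsq_coe]
    linear_combination -(z 1 * zt 1) * hzz
  · simp [Matrix.mul_apply, Fin.sum_univ_two, Xmat_apply, Pmat, dualS, h, normsq_coe]
    linear_combination (z 1 * zt 0) * hzz

/-- For equal nonzero norms, `X̃ = −g⁻¹ X g`. -/
theorem stmt4 (z zt : V) (h : normsq z = normsq zt) (hz : normsq z ≠ 0) :
    Xmat zt = -((gMat z zt)⁻¹ * Xmat z * gMat z zt) := by
  set n : ℝ := Real.sqrt (normsq z * normsq zt) with hn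
  have hprod : 0 < normsq z * normsq zt := by
    have h1 : 0 < normsq z := lt_of_le_of_ne (normsq_nonneg z) (Ne.symm hz)
    have h2 : 0 < normsq zt := h ▸ h1
    exact mul_pos h1 h2
  have hnpos : 0 < n := Real.sqrt_pos.mpr hprod
  have hnn : n * n = normsq z * normsq zt := Real.mul_self_sqrt hprod.le
  have hnC : ((n : ℝ) : ℂ) ≠ 0 := by
    exact_mod_cast hnpos.ne'
  have hg : (gMat z zt)ᴴ * gMat z zt = 1 := by
    rw [gMat_eq z zt, ← hn, Matrix.conjTranspose_smul, Matrix.smul_mul, Matrix.mul_smul,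
      smul_smul, PhP, smul_smul]
    have : star ((n : ℂ))⁻¹ * ((n : ℂ))⁻¹ * ((normsq z * normsq zt : ℝ) : ℂ)
        = 1 := by
      rw [star_inv₀, Complex.star_def, Complex.conj_ofReal]
      push_cast [← hnn]
      field_simp
    rw [this, one_smul]
  have hinv : (gMat z zt)⁻¹ = (gMat z zt)ᴴ := Matrix.inv_eq_left_inv hg
  have claim : gMat z zt * Xmat zt = -(Xmat z * gMat z zt) := by
    rw [gMat_eq z zt, ← hn, Matrix.smul_mul, Matrix.mul_smul, Pclaim z zt h, smul_neg]
  calc Xmat zt = ((gMat z zt)ᴴ * gMat z zt) * Xmat zt := by rw [hg, one_mul]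
    _ = (gMat z zt)ᴴ * (gMat z zt * Xmat zt) := by rw [mul_assoc]
    _ = (gMat z zt)ᴴ * -(Xmat z * gMat z zt) := by rw [claim]
    _ = -((gMat z zt)ᴴ * Xmat z * gMat z zt) := by rw [mul_neg, mul_assoc]
    _ = -((gMat z zt)⁻¹ * Xmat z * gMat z zt) := by rw [hinv]
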